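/- arXiv:2102.09755 — 5 statements merged into one kernel-verified Lean document; each statement's English description precedes it below -/
import Mathlib

section
/- For any separable real Banach space X, R(X) ≤ 1 + 1/(1 + r_{X*}(1)), where r_{X*} is Opial's modulus of the dual X* (defined with weak* null sequences). -/
/-!
Let `x n ⇀ 0` and `y` lie in the unit ball with `A = liminf ‖x n + y‖ > 1`. Take norming
functionals `f n` of `x n + y` and, by the sequential Banach–Alaoglu theorem, pass to a
subsequence with `f n ⇀* g`. Testing `f n` against `x n` and `y` gives `A - 1 ≤ g y ≤ ‖g‖`;
testing `f n - g` against `x n` gives `A - 1 ≤ A - g y ≤ liminf ‖f n - g‖`. With `t = A - 1`,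
the pair `t⁻¹ • (f n - g)`, `-t⁻¹ • g` is admissible in `r_{X*}(1)`, and the difference of its
terms is `t⁻¹ • f n`, of norm at most `1 / t`; hence `1 + r_{X*}(1) ≤ 1 / t`.

Completeness enters through Banach–Steinhaus: weak* convergent sequences are bounded, so the
dual norm is weak* sequentially lower semicontinuous and `r_{X*}(1) ≥ 0`.
-/

open Filter Topology

variable {X : Type*} [NormedAddCommGroup X] [NormedSpace ℝ X]

/-- `x` is a weakly null sequence in `X`. -/
def WeakNull {X : Type*} [NormedAddCommGroup X] [NormedSpace ℝ X] (x : ℕ → X) : Prop :=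
  ∀ f : X →L[ℝ] ℝ, Tendsto (fun n => f (x n)) atTop (nhds 0)

/-- `f` converges to `g` in the weak* topology of the dual. -/
def WeakStarTendsto {X : Type*} [NormedAddCommGroup X] [NormedSpace ℝ X]
    (f : ℕ → X →L[ℝ] ℝ) (g : X →L[ℝ] ℝ) : Prop :=
  ∀ v : X, Tendsto (fun n => f n v) atTop (nhds (g v))

/-- `f` is a weak*-null sequence in the dual. -/
def WeakStarNull {X : Type*} [NormedAddCommGroup X] [NormedSpace ℝ X]
    (f : ℕ → X →L[ℝ] ℝ) : Prop :=
  WeakStarTendsto f 0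

/-- The coefficient `R(X)`. -/
noncomputable def RCoef (X : Type*) [NormedAddCommGroup X] [NormedSpace ℝ X] : ℝ :=
  sSup { r | ∃ (x : ℕ → X) (y : X), (∀ n, ‖x n‖ ≤ 1) ∧ WeakNull x ∧ ‖y‖ ≤ 1 ∧
    r = Filter.liminf (fun n => ‖x n + y‖) atTop }

/-- Opial's modulus of `X`. -/
noncomputable def opialModulus (X : Type*) [NormedAddCommGroup X] [NormedSpace ℝ X] (c : ℝ) : ℝ :=
  sInf { r | ∃ (x : ℕ → X) (y : X), c ≤ ‖y‖ ∧ WeakNull x ∧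
    1 ≤ Filter.liminf (fun n => ‖x n‖) atTop ∧
    r = Filter.liminf (fun n => ‖x n - y‖) atTop - 1 }

/-- Opial's modulus of the dual `X*`, with respect to weak*-null sequences. -/
noncomputable def opialModulusStar (X : Type*) [NormedAddCommGroup X] [NormedSpace ℝ X] (c : ℝ) : ℝ :=
  sInf { r | ∃ (f : ℕ → X →L[ℝ] ℝ) (g : X →L[ℝ] ℝ), c ≤ ‖g‖ ∧ WeakStarNull f ∧
    1 ≤ Filter.liminf (fun n => ‖f n‖) atTop ∧
    r = Filter.liminf (fun n => ‖f n - g‖) atTop - 1 }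

/-- Property(K) for `X`. -/
def PropertyK (X : Type*) [NormedAddCommGroup X] [NormedSpace ℝ X] : Prop :=
  ∃ K, 0 ≤ K ∧ K < 1 ∧ ∀ (x : ℕ → X) (y : X),
    WeakNull x → Tendsto (fun n => ‖x n‖) atTop (nhds 1) →
    Filter.liminf (fun n => ‖x n - y‖) atTop ≤ 1 → ‖y‖ ≤ K

/-- Property(K*) for the dual `X*`. -/
def PropertyKStar (X : Type*) [NormedAddCommGroup X] [NormedSpace ℝ X] : Prop :=
  ∃ K, 0 ≤ K ∧ K < 1 ∧ ∀ (f : ℕ → X →L[ℝ] ℝ) (g : X →L[ℝ] ℝ),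
    (∀ n, ‖f n‖ ≤ 1) → WeakStarNull f →
    Tendsto (fun n => ‖f n‖) atTop (nhds 1) →
    Filter.liminf (fun n => ‖f n - g‖) atTop ≤ 1 → ‖g‖ ≤ K


theorem liminf_le_liminf_add_of_tendsto {ι : Type*} {l : Filter ι} [l.NeBot] {u v c : ι → ℝ}
    {c₀ : ℝ} (hc : Tendsto c l (𝓝 c₀)) (huv : ∀ i, u i ≤ v i + c i)
    (hu : IsBoundedUnder (· ≥ ·) l u) (hv_le : IsBoundedUnder (· ≤ ·) l v)
    (hv_ge : IsBoundedUnder (· ≥ ·) l v) :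
    liminf u l ≤ liminf v l + c₀ :=
  calc liminf u l ≤ liminf (c + v) l :=
        liminf_le_liminf (.of_forall fun i => (huv i).trans_eq (add_comm _ _)) hu
          (isBoundedUnder_le_add hc.isBoundedUnder_le hv_le).isCoboundedUnder_ge
    _ ≤ limsup c l + liminf v l :=
        liminf_add_le hc.isBoundedUnder_ge hc.isBoundedUnder_le hv_ge hv_le.isCoboundedUnder_ge
    _ = liminf v l + c₀ := by rw [hc.limsup_eq, add_comm]

theorem exists_strictMono_weakStarTendsto [TopologicalSpace.SeparableSpace X]
    {f : ℕ → X →L[ℝ] ℝ} {r : ℝ} (hf : ∀ n, ‖f n‖ ≤ r) :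
    ∃ φ : ℕ → ℕ, StrictMono φ ∧ ∃ g : X →L[ℝ] ℝ, ‖g‖ ≤ r ∧ WeakStarTendsto (f ∘ φ) g := by
  obtain ⟨g, hg, φ, hφ, hlim⟩ := WeakDual.isSeqCompact_closedBall ℝ X 0 r
    (x := fun n => StrongDual.toWeakDual (f n)) (by simpa using hf)
  refine ⟨φ, hφ, WeakDual.toStrongDual g, by simpa using hg, fun v => ?_⟩
  exact ((WeakDual.eval_continuous v).tendsto g).comp hlim

theorem norm_le_liminf_norm_of_weakStarTendsto [CompleteSpace X] {f : ℕ → X →L[ℝ] ℝ}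
    {g : X →L[ℝ] ℝ} (h : WeakStarTendsto f g) :
    ‖g‖ ≤ liminf (fun n => ‖f n‖) atTop := by
  obtain ⟨C, hC⟩ : ∃ C, ∀ n, ‖f n‖ ≤ C :=
    banach_steinhaus fun v => (h v).norm.bddAbove_range.imp fun _ hC n => hC ⟨n, rfl⟩
  have hcobdd : IsCoboundedUnder (· ≥ ·) atTop fun n => ‖f n‖ :=
    (isBoundedUnder_of ⟨C, hC⟩).isCoboundedUnder_ge
  refine g.opNorm_le_of_unit_norm (le_liminf_of_le hcobdd (.of_forall fun n => norm_nonneg _))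
    fun v hv => ?_
  rw [← (h v).norm.liminf_eq]
  exact liminf_le_liminf (.of_forall fun n => by simpa [hv] using (f n).le_opNorm v)
    (isBoundedUnder_of ⟨0, fun n => norm_nonneg _⟩) hcobdd

theorem norm_le_liminf_norm_sub_of_weakStarNull [CompleteSpace X] {f : ℕ → X →L[ℝ] ℝ}
    (hf : WeakStarNull f) (g : X →L[ℝ] ℝ) :
    ‖g‖ ≤ liminf (fun n => ‖f n - g‖) atTop := by
  rw [← norm_neg g]
  exact norm_le_liminf_norm_of_weakStarTendsto fun v => by
    simpa [sub_eq_neg_add] using (hf v).sub_const (g v)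

theorem opialModulusStar_le [CompleteSpace X] {c : ℝ} {f : ℕ → X →L[ℝ] ℝ} {g : X →L[ℝ] ℝ}
    (hg : c ≤ ‖g‖) (hf : WeakStarNull f) (hf_norm : 1 ≤ liminf (fun n => ‖f n‖) atTop) :
    opialModulusStar X c ≤ liminf (fun n => ‖f n - g‖) atTop - 1 := by
  refine csInf_le ⟨c - 1, ?_⟩ ⟨f, g, hg, hf, hf_norm, rfl⟩
  rintro _ ⟨f', g', hg', hf', -, rfl⟩
  linarith [norm_le_liminf_norm_sub_of_weakStarNull hf' g']

theorem opialModulusStar_nonneg [CompleteSpace X] {c : ℝ} (hc : 1 ≤ c) :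
    0 ≤ opialModulusStar X c := by
  refine Real.sInf_nonneg ?_
  rintro _ ⟨f, g, hg, hf, -, rfl⟩
  linarith [norm_le_liminf_norm_sub_of_weakStarNull hf g]

theorem one_add_opialModulusStar_le_inv [CompleteSpace X] {f : ℕ → X →L[ℝ] ℝ}
    {g : X →L[ℝ] ℝ} {t : ℝ} (hf : WeakStarTendsto f g) (hf_norm : ∀ n, ‖f n‖ ≤ 1)
    (ht : 0 < t) (htg : t ≤ ‖g‖) (ht_liminf : t ≤ liminf (fun n => ‖f n - g‖) atTop) :
    1 + opialModulusStar X 1 ≤ t⁻¹ := by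
  have ht' : 0 < t⁻¹ := inv_pos.2 ht
  have hG : 1 ≤ ‖-(t⁻¹ • g)‖ := by
    rw [norm_neg, norm_smul, Real.norm_of_nonneg ht'.le, ← inv_mul_cancel₀ ht.ne']
    gcongr
  have hF_null : WeakStarNull fun n => t⁻¹ • (f n - g) := fun v => by
    simpa using ((hf v).sub_const (g v)).const_mul t⁻¹
  have hF_norm : 1 ≤ liminf (fun n => ‖t⁻¹ • (f n - g)‖) atTop := by
    have hbdd : ∀ n, ‖f n - g‖ ≤ 1 + ‖g‖ := fun n =>
      (norm_sub_le _ _).trans (by gcongr; exact hf_norm n)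
    calc (1 : ℝ) = t⁻¹ * t := (inv_mul_cancel₀ ht.ne').symm
      _ ≤ liminf (fun _ : ℕ => t⁻¹) atTop * liminf (fun n => ‖f n - g‖) atTop := by
          rw [liminf_const]; gcongr
      _ ≤ liminf (fun n => ‖t⁻¹ • (f n - g)‖) atTop := by
          simp only [norm_smul, Real.norm_of_nonneg ht'.le]
          exact le_liminf_mul (.of_forall fun _ => ht'.le) isBoundedUnder_const
            (.of_forall fun n => norm_nonneg _)
            (isBoundedUnder_of ⟨_, hbdd⟩).isCoboundedUnder_ge
  have hdiff : liminf (fun n => ‖t⁻¹ • (f n - g) - -(t⁻¹ • g)‖) atTop ≤ t⁻¹ := by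
    refine liminf_le_of_frequently_le (.of_forall fun n => ?_)
      (isBoundedUnder_of ⟨0, fun n => norm_nonneg _⟩)
    rw [sub_neg_eq_add, ← smul_add, sub_add_cancel, norm_smul, Real.norm_of_nonneg ht'.le]
    exact mul_le_of_le_one_right ht'.le (hf_norm n)
  linarith [opialModulusStar_le hG hF_null hF_norm]

theorem apply_le_one_of_norm_le_one {f : X →L[ℝ] ℝ} {v : X} (hf : ‖f‖ ≤ 1) (hv : ‖v‖ ≤ 1) :
    f v ≤ 1 :=
  (Real.le_norm_self _).trans ((f.unit_le_opNorm v hv).trans hf)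

theorem liminf_norm_add_le_of_norming [CompleteSpace X] {x : ℕ → X} {y : X}
    (hx : ∀ n, ‖x n‖ ≤ 1) (hx_null : WeakNull x) (hy : ‖y‖ ≤ 1) {f : ℕ → X →L[ℝ] ℝ}
    {g : X →L[ℝ] ℝ} (hf_norm : ∀ n, ‖f n‖ ≤ 1) (hf_eq : ∀ n, f n (x n + y) = ‖x n + y‖)
    (hfg : WeakStarTendsto f g) :
    liminf (fun n => ‖x n + y‖) atTop ≤ 1 + 1 / (1 + opialModulusStar X 1) := by
  set A := liminf (fun n => ‖x n + y‖) atTop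
  have hρ := opialModulusStar_nonneg (X := X) le_rfl
  have hgy_le_one : g y ≤ 1 :=
    le_of_tendsto' (hfg y) fun n => apply_le_one_of_norm_le_one (hf_norm n) hy
  have hgy_le_norm : g y ≤ ‖g‖ := (Real.le_norm_self _).trans (g.unit_le_opNorm y hy)
  have hb : IsBoundedUnder (· ≥ ·) atTop fun n => ‖x n + y‖ :=
    isBoundedUnder_of ⟨0, fun _ => norm_nonneg _⟩
  have hA_le_apply : A ≤ 1 + g y := by
    simpa using liminf_le_liminf_add_of_tendsto (hfg y) (v := fun _ => 1)
      (fun n => by linarith [hf_eq n, map_add (f n) (x n) y,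
        apply_le_one_of_norm_le_one (hf_norm n) (hx n)])
      hb isBoundedUnder_const isBoundedUnder_const
  have hA_le_liminf : A ≤ liminf (fun n => ‖f n - g‖) atTop + g y := by
    refine liminf_le_liminf_add_of_tendsto (c := fun n => f n y + g (x n))
      (by simpa using (hfg y).add (hx_null g)) (fun n => ?_) hb
      (isBoundedUnder_of ⟨1 + ‖g‖, fun n =>
        (norm_sub_le _ _).trans (by gcongr; exact hf_norm n)⟩)
      (isBoundedUnder_of ⟨0, fun _ => norm_nonneg _⟩)
    have h := (Real.le_norm_self _).trans ((f n - g).unit_le_opNorm (x n) (hx n))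
    simp only [sub_apply] at h
    linarith [hf_eq n, map_add (f n) (x n) y]
  by_cases hA : A ≤ 1
  · have : 0 ≤ 1 / (1 + opialModulusStar X 1) := by positivity
    linarith
  have key := one_add_opialModulusStar_le_inv hfg hf_norm (t := A - 1) (by linarith)
    (by linarith) (by linarith)
  rw [← le_inv_comm₀ (by linarith) (by linarith)] at key
  linarith [one_div (1 + opialModulusStar X 1)]

theorem liminf_norm_add_le [CompleteSpace X] [TopologicalSpace.SeparableSpace X] {x : ℕ → X}
    {y : X} (hx : ∀ n, ‖x n‖ ≤ 1) (hx_null : WeakNull x) (hy : ‖y‖ ≤ 1) :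
    liminf (fun n => ‖x n + y‖) atTop ≤ 1 + 1 / (1 + opialModulusStar X 1) := by
  choose f hf_norm hf_eq using fun n => exists_dual_vector'' ℝ (x n + y)
  obtain ⟨φ, hφ, g, -, hg⟩ := exists_strictMono_weakStarTendsto hf_norm
  calc liminf (fun n => ‖x n + y‖) atTop
      ≤ liminf ((fun n => ‖x n + y‖) ∘ φ) atTop :=
        hφ.tendsto_atTop.liminf_le_liminf_comp
          (isBoundedUnder_of ⟨2, fun n =>
            (norm_add_le _ _).trans (by linarith [hx n])⟩).isCoboundedUnder_ge
          (isBoundedUnder_of ⟨0, fun _ => norm_nonneg _⟩)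
    _ ≤ 1 + 1 / (1 + opialModulusStar X 1) :=
        liminf_norm_add_le_of_norming (fun n => hx (φ n))
          (fun l => (hx_null l).comp hφ.tendsto_atTop) hy (fun n => hf_norm (φ n))
          (fun n => hf_eq (φ n)) hg

theorem stmt1 (X : Type*) [NormedAddCommGroup X] [NormedSpace ℝ X] [CompleteSpace X]
    [TopologicalSpace.SeparableSpace X] :
    RCoef X ≤ 1 + 1 / (1 + opialModulusStar X 1) := by
  have hρ := opialModulusStar_nonneg (X := X) le_rfl
  refine Real.sSup_le ?_ (by positivity)
  rintro _ ⟨x, y, hx, hx_null, hy, rfl⟩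
  exact liminf_norm_add_le hx hx_null hy
end

section
/- Let X* be the dual of a Banach space and r_{X*} its Opial modulus with respect to weak*-null sequences. If (x_n*) is a sequence in X* with ‖x_n*‖ = 1 for all n, x_n* ⇀* x* with x* ≠ 0, and ‖x*‖ ≤ liminf_n ‖x_n* − x*‖, then ‖x*‖ ≤ 1/(1 + r_{X*}(1)). -/
open Filter Topology

variable {X : Type*} [NormedAddCommGroup X] [NormedSpace ℝ X]

theorem stmt5 (X : Type*) [NormedAddCommGroup X] [NormedSpace ℝ X] [CompleteSpace X]
    (hr : 0 ≤ opialModulusStar X 1)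
    (f : ℕ → X →L[ℝ] ℝ) (hf : ∀ n, ‖f n‖ = 1)
    (g : X →L[ℝ] ℝ) (hfg : WeakStarTendsto f g) (hg : g ≠ 0)
    (hle : ‖g‖ ≤ Filter.liminf (fun n => ‖f n - g‖) atTop) :
    ‖g‖ ≤ 1 / (1 + opialModulusStar X 1) := by
  have hg0 : (0:ℝ) < ‖g‖ := norm_pos_iff.mpr hg
  -- ‖g‖ ≤ 1
  have hg1 : ‖g‖ ≤ 1 := by
    refine ContinuousLinearMap.opNorm_le_bound g zero_le_one (fun v => ?_)
    have h1 : Tendsto (fun n => |f n v|) atTop (nhds |g v|) := (hfg v).abs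
    refine le_of_tendsto h1 (Eventually.of_forall (fun n => ?_))
    calc |f n v| ≤ ‖f n‖ * ‖v‖ := (f n).le_opNorm v
    _ = 1 * ‖v‖ := by rw [hf n]
  set S := { r | ∃ (F : ℕ → X →L[ℝ] ℝ) (G : X →L[ℝ] ℝ), 1 ≤ ‖G‖ ∧ WeakStarNull F ∧
    1 ≤ Filter.liminf (fun n => ‖F n‖) atTop ∧
    r = Filter.liminf (fun n => ‖F n - G‖) atTop - 1 } with hS
  have hmem : (1/‖g‖ - 1) ∈ S := by
    refine ⟨fun n => ‖g‖⁻¹ • (f n - g), -(‖g‖⁻¹ • g), ?_, ?_, ?_, ?_⟩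
    · have hns := norm_smul (‖g‖⁻¹) g
      rw [norm_neg, hns, norm_inv, norm_norm, inv_mul_cancel₀ hg0.ne']
    · intro v
      have h1 := ((hfg v).sub_const (g v)).const_mul ‖g‖⁻¹
      simp only [sub_self, mul_zero] at h1
      have heq : (fun n => (‖g‖⁻¹ • (f n - g) : X →L[ℝ] ℝ) v)
          = fun n => ‖g‖⁻¹ * (f n v - g v) := by
        funext n
        simp [ContinuousLinearMap.smul_apply, ContinuousLinearMap.sub_apply]
      rw [ContinuousLinearMap.zero_apply, heq]
      exact h1
    · have heq : (fun n => ‖(‖g‖⁻¹ • (f n - g) : X →L[ℝ] ℝ)‖)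
          = fun n => ‖g‖⁻¹ * ‖f n - g‖ := by
        funext n
        have hns := norm_smul (‖g‖⁻¹) (f n - g)
        rw [hns, norm_inv, norm_norm]
      rw [heq]
      have hbdd : Filter.IsBoundedUnder (· ≥ ·) atTop (fun n => ‖f n - g‖) :=
        Filter.isBoundedUnder_of ⟨0, fun n => norm_nonneg _⟩
      have hcobdd : Filter.IsCoboundedUnder (· ≥ ·) atTop (fun n => ‖f n - g‖) := by
        refine Filter.IsBoundedUnder.isCoboundedUnder_ge
          (Filter.isBoundedUnder_of ⟨1 + ‖g‖, fun n => ?_⟩)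
        calc ‖f n - g‖ ≤ ‖f n‖ + ‖g‖ := norm_sub_le _ _
        _ = 1 + ‖g‖ := by rw [hf n]
      have hmono : Monotone (fun x : ℝ => ‖g‖⁻¹ * x) :=
        fun a b hab => mul_le_mul_of_nonneg_left hab (inv_nonneg.mpr hg0.le)
      have hmap := hmono.map_liminf_of_continuousAt (fun n => ‖f n - g‖)
        ((continuous_const.mul continuous_id).continuousAt) hcobdd hbdd
      have : (1:ℝ) ≤ ‖g‖⁻¹ * Filter.liminf (fun n => ‖f n - g‖) atTop := by
        rw [← inv_mul_cancel₀ hg0.ne']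
        exact mul_le_mul_of_nonneg_left hle (inv_nonneg.mpr hg0.le)
      calc (1:ℝ) ≤ ‖g‖⁻¹ * Filter.liminf (fun n => ‖f n - g‖) atTop := this
      _ = Filter.liminf ((fun x => ‖g‖⁻¹ * x) ∘ fun n => ‖f n - g‖) atTop := hmap
      _ = Filter.liminf (fun n => ‖g‖⁻¹ * ‖f n - g‖) atTop := rfl
    · have heq : (fun n => ‖(‖g‖⁻¹ • (f n - g) : X →L[ℝ] ℝ) - -(‖g‖⁻¹ • g)‖)
          = fun _ : ℕ => 1/‖g‖ := by
        funext n
        have h2 : (‖g‖⁻¹ • (f n - g) : X →L[ℝ] ℝ) - -(‖g‖⁻¹ • g) = ‖g‖⁻¹ • f n := by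
          rw [sub_neg_eq_add, ← smul_add, sub_add_cancel]
        have hns := norm_smul (‖g‖⁻¹) (f n)
        rw [h2, hns, norm_inv, norm_norm, hf n, mul_one, one_div]
      rw [heq, Filter.liminf_const]
  have habs : opialModulusStar X 1 ≤ 1/‖g‖ - 1 ∨ opialModulusStar X 1 = 0 := by
    by_cases hb : BddBelow S
    · left
      exact csInf_le hb hmem
    · right
      exact Real.sInf_of_not_bddBelow hb
  have hr1 : (0:ℝ) < 1 + opialModulusStar X 1 := by linarith
  rcases habs with h | h
  · rw [le_div_iff₀ hr1]
    have h2 : 1 + opialModulusStar X 1 ≤ 1/‖g‖ := by linarith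
    calc ‖g‖ * (1 + opialModulusStar X 1) ≤ ‖g‖ * (1/‖g‖) :=
      mul_le_mul_of_nonneg_left h2 hg0.le
    _ = 1 := by field_simp
  · rw [h]; simpa using hg1
end

section
/- Let X be a Banach space, (x_n) ⊆ B_X with x_n ⇀ 0 weakly, x ∈ B_X, and suppose x_n* are norming functionals for x_n + x (‖x_n*‖ = 1, x_n*(x_n + x) = ‖x_n + x‖) with x_n* ⇀* x*. Then liminf_n ‖x_n + x‖ ≤ liminf_n ‖x_n* − x*‖ + ‖x‖. -/
open Filter Topology

variable {X : Type*} [NormedAddCommGroup X] [NormedSpace ℝ X]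

theorem stmt8 (X : Type*) [NormedAddCommGroup X] [NormedSpace ℝ X] [CompleteSpace X]
    (x : ℕ → X) (hx : ∀ n, ‖x n‖ ≤ 1) (hw : WeakNull x)
    (y : X) (hy : ‖y‖ ≤ 1)
    (f : ℕ → X →L[ℝ] ℝ) (hf : ∀ n, ‖f n‖ = 1)
    (hnorm : ∀ n, f n (x n + y) = ‖x n + y‖)
    (g : X →L[ℝ] ℝ) (hfg : WeakStarTendsto f g) :
    Filter.liminf (fun n => ‖x n + y‖) atTop ≤
      Filter.liminf (fun n => ‖f n - g‖) atTop + ‖y‖ := by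
  have hg : ‖g‖ ≤ 1 := by
    refine ContinuousLinearMap.opNorm_le_bound g zero_le_one fun v => ?_
    have h2 : ∀ n, ‖f n v‖ ≤ ‖v‖ := fun n => by
      calc ‖f n v‖ ≤ ‖f n‖ * ‖v‖ := (f n).le_opNorm v
        _ = ‖v‖ := by rw [hf n, one_mul]
    have := le_of_tendsto (hfg v).norm (Filter.Eventually.of_forall h2)
    simpa using this
  have hgy : g y ≤ ‖y‖ := by
    calc g y ≤ ‖g y‖ := le_abs_self _
      _ ≤ ‖g‖ * ‖y‖ := g.le_opNorm y
      _ ≤ 1 * ‖y‖ := by gcongr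
      _ = ‖y‖ := one_mul _
  have key : ∀ n, ‖x n + y‖ ≤ ‖f n - g‖ + (g (x n) + f n y) := fun n => by
    have heq : ‖x n + y‖ = (f n - g) (x n) + (g (x n) + f n y) := by
      rw [← hnorm n]
      simp [map_add]
      ring
    rw [heq]
    have h1 : (f n - g) (x n) ≤ ‖f n - g‖ := by
      calc (f n - g) (x n) ≤ ‖(f n - g) (x n)‖ := le_abs_self _
        _ ≤ ‖f n - g‖ * ‖x n‖ := (f n - g).le_opNorm _
        _ ≤ ‖f n - g‖ * 1 := by gcongr; exact hx n
        _ = ‖f n - g‖ := mul_one _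
    linarith
  have hc : Tendsto (fun n => g (x n) + f n y) atTop (nhds (g y)) := by
    have := (hw g).add (hfg y)
    simpa using this
  have hbdd : Filter.IsBoundedUnder (· ≥ ·) atTop (fun n => ‖f n - g‖) :=
    Filter.isBoundedUnder_of ⟨0, fun n => norm_nonneg _⟩
  have hbdd2 : Filter.IsBoundedUnder (· ≥ ·) atTop (fun n => ‖x n + y‖) :=
    Filter.isBoundedUnder_of ⟨0, fun n => norm_nonneg _⟩
  have hcob : Filter.IsCoboundedUnder (· ≥ ·) atTop (fun n => ‖f n - g‖) := by
    refine Filter.IsBoundedUnder.isCoboundedUnder_ge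
      (Filter.isBoundedUnder_of ⟨1 + ‖g‖, fun n => ?_⟩)
    calc ‖f n - g‖ ≤ ‖f n‖ + ‖g‖ := norm_sub_le _ _
      _ = 1 + ‖g‖ := by rw [hf n]
  set L := Filter.liminf (fun n => ‖f n - g‖) atTop with hL
  have main : ∀ ε > (0:ℝ), Filter.liminf (fun n => ‖x n + y‖) atTop ≤ L + g y + ε := by
    intro ε hε
    have hfreq : ∃ᶠ n in atTop, ‖f n - g‖ < L + ε / 2 :=
      Filter.frequently_lt_of_liminf_lt hcob (by linarith)
    have hev : ∀ᶠ n in atTop, g (x n) + f n y < g y + ε / 2 := by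
      have := hc (Iio_mem_nhds (show g y < g y + ε / 2 by linarith))
      simpa using this
    have hfreq2 : ∃ᶠ n in atTop, ‖x n + y‖ ≤ L + g y + ε := by
      refine (hfreq.and_eventually hev).mono ?_
      rintro n ⟨h1, h2⟩
      have := key n
      linarith
    exact Filter.liminf_le_of_frequently_le hfreq2 hbdd2
  have : Filter.liminf (fun n => ‖x n + y‖) atTop ≤ L + g y := by
    refine le_of_forall_pos_le_add fun ε hε => ?_
    have := main ε hε
    linarith
  linarith
end

section
/- Let X be a Banach space, (x_n) ⊆ B_X with x_n ⇀ 0 weakly, x ∈ B_X, x_n* norming functionals for x_n + x with x_n* ⇀* x*. If liminf_n ‖x_n* − x*‖ = 0, then liminf_n ‖x_n + x‖ = ‖x‖. -/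
open Filter Topology

variable {X : Type*} [NormedAddCommGroup X] [NormedSpace ℝ X]

theorem stmt9 (X : Type*) [NormedAddCommGroup X] [NormedSpace ℝ X] [CompleteSpace X]
    (x : ℕ → X) (hx : ∀ n, ‖x n‖ ≤ 1) (hw : WeakNull x)
    (y : X) (hy : ‖y‖ ≤ 1)
    (f : ℕ → X →L[ℝ] ℝ) (hf : ∀ n, ‖f n‖ = 1)
    (hnorm : ∀ n, f n (x n + y) = ‖x n + y‖)
    (g : X →L[ℝ] ℝ) (hfg : WeakStarTendsto f g)
    (h0 : Filter.liminf (fun n => ‖f n - g‖) atTop = 0) :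
    Filter.liminf (fun n => ‖x n + y‖) atTop = ‖y‖ := by
  have hbdd : IsBoundedUnder (· ≥ ·) atTop (fun n => ‖x n + y‖) :=
    ⟨0, eventually_map.mpr (Eventually.of_forall fun n => norm_nonneg _)⟩
  have hbdd' : IsBoundedUnder (· ≤ ·) atTop (fun n => ‖x n + y‖) :=
    ⟨2, eventually_map.mpr <| Eventually.of_forall fun n => by
      calc ‖x n + y‖ ≤ ‖x n‖ + ‖y‖ := norm_add_le _ _
        _ ≤ 1 + 1 := add_le_add (hx n) hy
        _ = 2 := by norm_num⟩
  have hcobdd : IsCoboundedUnder (· ≥ ·) atTop (fun n => ‖x n + y‖) :=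
    hbdd'.isCoboundedUnder_ge
  -- `g y ≤ ‖y‖` since `‖g‖ ≤ 1`
  have hg1 : ∀ v : X, g v ≤ ‖v‖ := by
    intro v
    have : Tendsto (fun n => f n v) atTop (nhds (g v)) := hfg v
    refine le_of_tendsto this (Eventually.of_forall fun n => ?_)
    calc f n v ≤ |f n v| := le_abs_self _
      _ ≤ ‖f n‖ * ‖v‖ := (f n).le_opNorm v
      _ = ‖v‖ := by rw [hf n, one_mul]
  -- lower bound
  have hlow : ‖y‖ ≤ Filter.liminf (fun n => ‖x n + y‖) atTop := by
    obtain ⟨φ, hφ1, hφy⟩ := exists_dual_vector'' ℝ y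
    have htend : Tendsto (fun n => φ (x n + y)) atTop (nhds ‖y‖) := by
      have := (hw φ).add_const (φ y)
      simpa [map_add, hφy] using this
    have h1 : Filter.liminf (fun n => φ (x n + y)) atTop = ‖y‖ := htend.liminf_eq
    rw [← h1]
    refine liminf_le_liminf (Eventually.of_forall fun n => ?_) ?_ hcobdd
    · calc φ (x n + y) ≤ |φ (x n + y)| := le_abs_self _
        _ ≤ ‖φ‖ * ‖x n + y‖ := φ.le_opNorm _
        _ ≤ 1 * ‖x n + y‖ := by
            exact mul_le_mul_of_nonneg_right hφ1 (norm_nonneg _)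
        _ = ‖x n + y‖ := one_mul _
    · exact ⟨-2, eventually_map.mpr <| Eventually.of_forall fun n => by
        have : |φ (x n + y)| ≤ 2 := by
          calc |φ (x n + y)| ≤ ‖φ‖ * ‖x n + y‖ := φ.le_opNorm _
            _ ≤ 1 * 2 := by
                refine mul_le_mul hφ1 ?_ (norm_nonneg _) zero_le_one
                calc ‖x n + y‖ ≤ ‖x n‖ + ‖y‖ := norm_add_le _ _
                  _ ≤ 1 + 1 := add_le_add (hx n) hy
                  _ = 2 := by norm_num
            _ = 2 := one_mul 2
        linarith [neg_abs_le (φ (x n + y))]⟩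
  -- upper bound
  have hup : Filter.liminf (fun n => ‖x n + y‖) atTop ≤ ‖y‖ := by
    have key : ∀ ε : ℝ, 0 < ε →
        Filter.liminf (fun n => ‖x n + y‖) atTop ≤ ‖y‖ + 2 * ε := by
      intro ε hε
      -- frequently ‖f n - g‖ < ε
      have hfreq : ∃ᶠ n in atTop, ‖f n - g‖ < ε := by
        by_contra hc
        rw [not_frequently] at hc
        have : (ε : ℝ) ≤ Filter.liminf (fun n => ‖f n - g‖) atTop := by
          refine le_liminf_of_le ?_ ?_
          · refine IsBoundedUnder.isCoboundedUnder_ge ⟨1 + ‖g‖,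
              eventually_map.mpr <| Eventually.of_forall fun n => ?_⟩
            calc ‖f n - g‖ ≤ ‖f n‖ + ‖g‖ := norm_sub_le _ _
              _ = 1 + ‖g‖ := by rw [hf n]
          · exact hc.mono fun n hn => not_lt.mp hn
        rw [h0] at this; linarith
      -- eventually g (x n) + f n y is close to g y
      have hev : ∀ᶠ n in atTop, g (x n) + f n y < g y + ε := by
        have ht : Tendsto (fun n => g (x n) + f n y) atTop (nhds (0 + g y)) :=
          (hw g).add (hfg y)
        rw [zero_add] at ht
        exact ht.eventually (eventually_lt_nhds (show g y < g y + ε by linarith))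
      have hfreq2 : ∃ᶠ n in atTop, ‖x n + y‖ ≤ ‖y‖ + 2 * ε := by
        refine (hfreq.and_eventually hev).mono ?_
        rintro n ⟨h1, h2⟩
        have heq : ‖x n + y‖ = (f n - g) (x n) + (g (x n) + f n y) := by
          rw [← hnorm n]
          simp [map_add]
          ring
        have hb : (f n - g) (x n) ≤ ε := by
          calc (f n - g) (x n) ≤ |(f n - g) (x n)| := le_abs_self _
            _ ≤ ‖f n - g‖ * ‖x n‖ := (f n - g).le_opNorm _
            _ ≤ ε * 1 := mul_le_mul h1.le (hx n) (norm_nonneg _) hε.le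
            _ = ε := mul_one _
        have hgy : g y ≤ ‖y‖ := hg1 y
        rw [heq]; linarith
      exact liminf_le_of_frequently_le hfreq2 hbdd
    by_contra hc
    push_neg at hc
    have hε : 0 < (Filter.liminf (fun n => ‖x n + y‖) atTop - ‖y‖) / 3 := by linarith
    have := key _ hε
    linarith
  linarith
end

section
/- If a Banach space X has Property(K) with constant K, then its Opial modulus satisfies r_X(1) ≥ 0, and moreover for any weakly null sequence (x_n) with liminf_n ‖x_n‖ ≥ 1 and any x with ‖x‖ ≥ 1 and liminf_n ‖x_n − x‖ ≤ 1, one derives a contradiction (i.e., liminf_n ‖x_n − x‖ > 1). -/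
open Filter Topology

variable {X : Type*} [NormedAddCommGroup X] [NormedSpace ℝ X]

/-! If `liminf ‖x n - y‖ ≤ 1`, weak lower semicontinuity of the norm forces `‖y‖ = 1`.
Retracting `x n` radially onto the unit ball keeps the sequence weakly null, makes its norms
tend to `1` and does not move it farther than `1` from `y`, so Property(K) gives `‖y‖ ≤ K < 1`. -/

section UnitBallRetraction

variable {E : Type*} [NormedAddCommGroup E] [NormedSpace ℝ E]

noncomputable def unitBallRetraction (v : E) : E := (max ‖v‖ 1)⁻¹ • v

lemma norm_unitBallRetraction (v : E) : ‖unitBallRetraction v‖ = min ‖v‖ 1 := by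
  rcases le_total ‖v‖ 1 with h | h
  · simp [unitBallRetraction, h]
  · have hv : ‖v‖ ≠ 0 := (zero_lt_one.trans_le h).ne'
    simp [unitBallRetraction, norm_smul, h, hv]

lemma norm_unitBallRetraction_sub_le {y : E} (hy : ‖y‖ ≤ 1) (v : E) :
    ‖unitBallRetraction v - y‖ ≤ max ‖v - y‖ 1 := by
  set t := (max ‖v‖ 1)⁻¹
  have ht0 : 0 < t := inv_pos.2 (zero_lt_one.trans_le (le_max_right _ _))
  have ht1 : t ≤ 1 := inv_le_one_of_one_le₀ (le_max_right _ _)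
  calc ‖t • v - y‖ = ‖t • (v - y) + (1 - t) • (-y)‖ := by congr 1; module
    _ ≤ t * ‖v - y‖ + (1 - t) * ‖y‖ := by
      refine (norm_add_le _ _).trans_eq ?_
      rw [norm_smul, norm_smul, norm_neg, Real.norm_of_nonneg ht0.le,
        Real.norm_of_nonneg (sub_nonneg.2 ht1)]
    _ ≤ t * max ‖v - y‖ 1 + (1 - t) * max ‖v - y‖ 1 := by
      have := hy.trans (le_max_right ‖v - y‖ 1)
      gcongr
      exact le_max_left _ _
    _ = max ‖v - y‖ 1 := by ring

end UnitBallRetraction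

lemma tendsto_min_of_le_liminf {ι α : Type*} [ConditionallyCompleteLinearOrder α]
    [TopologicalSpace α] [OrderTopology α] {l : Filter ι} {f : ι → α} {c : α}
    (hf : IsBoundedUnder (· ≥ ·) l f) (hc : c ≤ liminf f l) :
    Tendsto (fun i => min (f i) c) l (𝓝 c) := by
  refine tendsto_order.2
    ⟨fun a ha => ?_, fun a ha => .of_forall fun i => (min_le_right _ _).trans_lt ha⟩
  filter_upwards [eventually_lt_of_lt_liminf (ha.trans_le hc) hf] with i hi
  exact lt_min hi ha

namespace WeakNull

variable {x : ℕ → X}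

lemma smul_of_abs_le (hx : WeakNull x) {c : ℕ → ℝ} {C : ℝ} (hc : ∀ n, |c n| ≤ C) :
    WeakNull fun n => c n • x n := fun f => by
  simpa only [map_smul, smul_eq_mul] using
    isBoundedUnder_le_mul_tendsto_zero ⟨C, eventually_map.2 (.of_forall hc)⟩ (hx f)

lemma unitBallRetraction (hx : WeakNull x) : WeakNull fun n => unitBallRetraction (x n) :=
  hx.smul_of_abs_le (C := 1) fun n => by
    rw [abs_of_pos (inv_pos.2 (zero_lt_one.trans_le (le_max_right _ _)))]
    exact inv_le_one_of_one_le₀ (le_max_right _ _)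

lemma norm_le_liminf_norm_sub (hx : WeakNull x) (y : X)
    (hcob : IsCoboundedUnder (· ≥ ·) atTop fun n => ‖x n - y‖) :
    ‖y‖ ≤ liminf (fun n => ‖x n - y‖) atTop := by
  obtain ⟨f, hf, hfy⟩ := exists_dual_vector'' ℝ y
  have hlim : Tendsto (fun n => f y - f (x n)) atTop (𝓝 ‖y‖) := by
    simpa [hfy] using tendsto_const_nhds.sub (hx f)
  rw [← hlim.liminf_eq]
  refine liminf_le_liminf (.of_forall fun n => ?_) hlim.isBoundedUnder_ge hcob
  calc f y - f (x n) = f (y - x n) := (map_sub f _ _).symm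
    _ ≤ ‖f‖ * ‖y - x n‖ := (le_abs_self _).trans (f.le_opNorm _)
    _ ≤ ‖x n - y‖ := by
      rw [norm_sub_rev]
      exact mul_le_of_le_one_left (norm_nonneg _) hf

end WeakNull

theorem one_lt_liminf_norm_sub_of_propertyK {K : ℝ} (hK1 : K < 1)
    (hK : ∀ (x : ℕ → X) (y : X), WeakNull x →
      Tendsto (fun n => ‖x n‖) atTop (𝓝 1) →
      liminf (fun n => ‖x n - y‖) atTop ≤ 1 → ‖y‖ ≤ K)
    {x : ℕ → X} {y : X} (hx : WeakNull x) (hlx : 1 ≤ liminf (fun n => ‖x n‖) atTop)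
    (hy : 1 ≤ ‖y‖) : 1 < liminf (fun n => ‖x n - y‖) atTop := by
  by_contra! hcon
  -- otherwise `liminf ‖x n‖` would be the junk value `0`
  have hx_cob : IsCoboundedUnder (· ≥ ·) atTop fun n => ‖x n‖ := by
    by_contra h
    rw [Real.liminf_of_not_isCoboundedUnder h] at hlx
    norm_num at hlx
  have hcob : IsCoboundedUnder (· ≥ ·) atTop fun n => ‖x n - y‖ := by
    obtain ⟨B, hB⟩ := hx_cob.frequently_le
    exact .of_frequently_le (a := B + ‖y‖)
      (hB.mono fun n hn => (norm_sub_le _ _).trans (by linarith))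
  have hy1 : ‖y‖ = 1 := le_antisymm ((hx.norm_le_liminf_norm_sub y hcob).trans hcon) hy
  have hu_norm : Tendsto (fun n => ‖unitBallRetraction (x n)‖) atTop (𝓝 1) := by
    simpa only [norm_unitBallRetraction] using
      tendsto_min_of_le_liminf (isBoundedUnder_of ⟨0, fun n => norm_nonneg _⟩) hlx
  have hu_dist : liminf (fun n => ‖unitBallRetraction (x n) - y‖) atTop ≤ 1 := by
    refine le_of_forall_pos_le_add fun ε hε => liminf_le_of_frequently_le ?_
      (isBoundedUnder_of ⟨0, fun n => norm_nonneg _⟩)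
    refine (frequently_lt_of_liminf_lt (b := 1 + ε) hcob (by linarith)).mono fun n hn => ?_
    exact (norm_unitBallRetraction_sub_le hy1.le _).trans (max_le hn.le (by linarith))
  linarith [hK _ y hx.unitBallRetraction hu_norm hu_dist]

theorem stmt12_general (X : Type*) [NormedAddCommGroup X] [NormedSpace ℝ X]
    (K : ℝ) (hK1 : K < 1)
    (hK : ∀ (x : ℕ → X) (y : X), WeakNull x →
      Tendsto (fun n => ‖x n‖) atTop (nhds 1) →
      Filter.liminf (fun n => ‖x n - y‖) atTop ≤ 1 → ‖y‖ ≤ K) :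
    0 ≤ opialModulus X 1 ∧
      ∀ (x : ℕ → X) (y : X), WeakNull x →
        1 ≤ Filter.liminf (fun n => ‖x n‖) atTop → 1 ≤ ‖y‖ →
        1 < Filter.liminf (fun n => ‖x n - y‖) atTop := by
  refine ⟨Real.sInf_nonneg ?_, fun x y => one_lt_liminf_norm_sub_of_propertyK hK1 hK⟩
  rintro _ ⟨x, y, hy, hx, hlx, rfl⟩
  linarith [one_lt_liminf_norm_sub_of_propertyK hK1 hK hx hlx hy]

theorem stmt12 (X : Type*) [NormedAddCommGroup X] [NormedSpace ℝ X] [CompleteSpace X]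
    (K : ℝ) (hK0 : 0 ≤ K) (hK1 : K < 1)
    (hK : ∀ (x : ℕ → X) (y : X), WeakNull x →
      Tendsto (fun n => ‖x n‖) atTop (nhds 1) →
      Filter.liminf (fun n => ‖x n - y‖) atTop ≤ 1 → ‖y‖ ≤ K) :
    0 ≤ opialModulus X 1 ∧
      ∀ (x : ℕ → X) (y : X), WeakNull x →
        1 ≤ Filter.liminf (fun n => ‖x n‖) atTop → 1 ≤ ‖y‖ →
        1 < Filter.liminf (fun n => ‖x n - y‖) atTop :=
  stmt12_general X K hK1 hK
end
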